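/- arXiv:2604.27823 — 4 statements merged into one kernel-verified Lean document; each statement's English description precedes it below -/
import Mathlib

section
/- In a one-to-one stable marriage market, the set of matched students is identical in any two stable matchings. -/
open Finset

/-- A (many-to-one) matching market: acceptability edges, capacities, and
rank functions encoding strict preferences (lower rank = more preferred). -/
structure Market (S I : Type*) where
  E : Finset (S × I)
  q : I → ℕ
  prefS : S → I → ℕ
  prefI : I → S → ℕ

variable {S I : Type*} [DecidableEq S] [DecidableEq I]

/-- The edges of `M` incident to institution `i`. -/
def edgesOf (M : Finset (S × I)) (i : I) : Finset (S × I) :=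
  M.filter (fun e => e.2 = i)

/-- The set of students assigned to institution `i` under `M`. -/
def assigned (M : Finset (S × I)) (i : I) : Finset S :=
  (edgesOf M i).image Prod.fst

/-- `M` is a matching: it uses acceptable edges, each student is matched at most
once, and each institution `i` is matched to at most `q i` students. -/
def IsMatching (mkt : Market S I) (M : Finset (S × I)) : Prop :=
  M ⊆ mkt.E ∧ (∀ s : S, (M.filter (fun e => e.1 = s)).card ≤ 1) ∧
    ∀ i : I, (edgesOf M i).card ≤ mkt.q i

/-- `(s, i)` blocks `M`: it is an acceptable non-matching pair, `s` strictly prefers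
`i` to her assignment (being unmatched is worst), and `i` has a free seat or a
student it likes strictly less than `s`. -/
def Blocks (mkt : Market S I) (M : Finset (S × I)) (s : S) (i : I) : Prop :=
  (s, i) ∈ mkt.E ∧ (s, i) ∉ M ∧
    (∀ i' : I, (s, i') ∈ M → mkt.prefS s i < mkt.prefS s i') ∧
    ((edgesOf M i).card < mkt.q i ∨ ∃ s' ∈ assigned M i, mkt.prefI i s < mkt.prefI i s')

/-- A stable matching admits no blocking pair. -/
def IsStable (mkt : Market S I) (M : Finset (S × I)) : Prop :=
  IsMatching mkt M ∧ ∀ s i, ¬ Blocks mkt M s i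

/-- Each student is matched to at most one institution. -/
lemma uniqS' {mkt : Market S I} {M : Finset (S × I)} (hM : IsMatching mkt M)
    {s : S} {i i' : I} (h : (s, i) ∈ M) (h' : (s, i') ∈ M) : i = i' := by
  have h1 : (s, i) ∈ M.filter (fun e => e.1 = s) := by simp [h]
  have h2 : (s, i') ∈ M.filter (fun e => e.1 = s) := by simp [h']
  have := Finset.card_le_one.mp (hM.2.1 s) _ h1 _ h2
  exact (Prod.mk.injEq _ _ _ _ ▸ this).2

/-- Each institution with capacity one is matched to at most one student. -/
lemma uniqI' {mkt : Market S I} {M : Finset (S × I)} (hM : IsMatching mkt M)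
    (hq : ∀ i, mkt.q i = 1)
    {s s' : S} {i : I} (h : (s, i) ∈ M) (h' : (s', i) ∈ M) : s = s' := by
  have h1 : (s, i) ∈ edgesOf M i := by simp [edgesOf, h]
  have h2 : (s', i) ∈ edgesOf M i := by simp [edgesOf, h']
  have hc : (edgesOf M i).card ≤ 1 := (hq i) ▸ hM.2.2 i
  have := Finset.card_le_one.mp hc _ h1 _ h2
  exact (Prod.mk.injEq _ _ _ _ ▸ this).1

lemma aux_lonely [Fintype S] (mkt : Market S I)
    (hq : ∀ i, mkt.q i = 1)
    (hstrictS : ∀ s, Function.Injective (mkt.prefS s))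
    (hstrictI : ∀ i, Function.Injective (mkt.prefI i))
    (M M' : Finset (S × I)) (hM : IsStable mkt M) (hM' : IsStable mkt M')
    (s₀ : S) (i₀ : I) (h0 : (s₀, i₀) ∈ M) (h0' : ∀ i, (s₀, i) ∉ M') : False := by
  classical
  obtain ⟨hMm, hMst⟩ := hM
  obtain ⟨hM'm, hM'st⟩ := hM'
  -- invariant on pairs
  set Inv : S × I → Prop := fun p =>
    p ∈ M ∧ ∀ i', (p.1, i') ∈ M' → mkt.prefS p.1 p.2 < mkt.prefS p.1 i' with hInv
  have step : ∀ p : S × I, Inv p → { r : S × I // Inv r ∧ (r.1, p.2) ∈ M' } := by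
    intro p hp
    obtain ⟨s, i⟩ := p
    obtain ⟨hpM, hpPref⟩ := hp
    have hsE : (s, i) ∈ mkt.E := hMm.1 hpM
    have hsnM' : (s, i) ∉ M' := fun h => lt_irrefl _ (hpPref i h)
    -- (s, i) does not block M', so i has a student s' it prefers to s
    have hnb := hM'st s i
    rw [Blocks] at hnb
    push_neg at hnb
    have h4 := hnb hsE hsnM' (fun i' h => hpPref i' h)
    have hcard1 : 0 < (edgesOf M' i).card := by
      have := h4.1; rw [hq i] at this; omega
    have hex : ∃ s', (s', i) ∈ M' := by
      obtain ⟨e, he⟩ := Finset.card_pos.mp hcard1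
      rw [edgesOf, Finset.mem_filter] at he
      exact ⟨e.1, by rw [show (e.1, i) = e from by rw [← he.2]]; exact he.1⟩
    set s' := hex.choose with hs'
    have hs'M' : (s', i) ∈ M' := hex.choose_spec
    have hs'ne : s' ≠ s := fun h => hsnM' (h ▸ hs'M')
    have hs'lt : mkt.prefI i s' < mkt.prefI i s := by
      have hmem : s' ∈ assigned M' i := by
        rw [assigned, Finset.mem_image]
        exact ⟨(s', i), by simp [edgesOf, hs'M'], rfl⟩
      have := h4.2 s' hmem
      have hne : mkt.prefI i s' ≠ mkt.prefI i s := fun h => hs'ne (hstrictI i h)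
      omega
    -- (s', i) ∉ M
    have hs'nM : (s', i) ∉ M := fun h => hs'ne (uniqI' hMm hq h hpM)
    -- (s', i) does not block M, so s' is matched in M to some i' it prefers to i
    have hnb2 := hMst s' i
    rw [Blocks] at hnb2
    push_neg at hnb2
    have h3 := hnb2 (hM'm.1 hs'M') hs'nM
    have hblockI : (edgesOf M i).card < mkt.q i ∨
        ∃ t ∈ assigned M i, mkt.prefI i s' < mkt.prefI i t := by
      right
      exact ⟨s, by rw [assigned, Finset.mem_image]; exact ⟨(s, i), by simp [edgesOf, hpM], rfl⟩,
        hs'lt⟩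
    have hex2 : ∃ i', (s', i') ∈ M ∧ mkt.prefS s' i' ≤ mkt.prefS s' i := by
      by_contra hc
      push_neg at hc
      have hmem : s ∈ assigned M i := by
        rw [assigned, Finset.mem_image]
        exact ⟨(s, i), by simp [edgesOf, hpM], rfl⟩
      have := (h3 (fun i' h => hc i' h)).2 s hmem
      omega
    set i' := hex2.choose with hi'def
    have hi'M : (s', i') ∈ M := hex2.choose_spec.1
    have hi'le : mkt.prefS s' i' ≤ mkt.prefS s' i := hex2.choose_spec.2
    have hi'ne : i' ≠ i := fun h => hs'nM (h ▸ hi'M)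
    have hi'lt : mkt.prefS s' i' < mkt.prefS s' i := by
      have hne : mkt.prefS s' i' ≠ mkt.prefS s' i := fun h => hi'ne (hstrictS s' h)
      omega
    refine ⟨(s', i'), ⟨hi'M, ?_⟩, hs'M'⟩
    intro i'' hi''
    have : i'' = i := uniqS' hM'm hi'' hs'M'
    rwa [this]
  -- build the infinite sequence
  have inv0 : Inv (s₀, i₀) := ⟨h0, fun i' h => absurd h (h0' i')⟩
  let g : ℕ → { p : S × I // Inv p } := fun n =>
    Nat.rec ⟨(s₀, i₀), inv0⟩ (fun _ p => ⟨(step p.1 p.2).1, (step p.1 p.2).2.1⟩) n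
  have hgM : ∀ n, (g n).1 ∈ M := fun n => (g n).2.1
  have hlink : ∀ n, ((g (n + 1)).1.1, (g n).1.2) ∈ M' :=
    fun n => (step (g n).1 (g n).2).2.2
  have hg0 : (g 0).1.1 = s₀ := rfl
  -- key injectivity claim
  have key : ∀ n d, (g n).1.1 = (g (n + d)).1.1 → d = 0 := by
    intro n
    induction n with
    | zero =>
      intro d hd
      by_contra hdne
      obtain ⟨d', rfl⟩ : ∃ d', d = d' + 1 := ⟨d - 1, by omega⟩
      rw [show 0 + (d' + 1) = d' + 1 from by omega] at hd
      have := hlink d'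
      rw [← hd, hg0] at this
      exact h0' _ this
    | succ n ih =>
      intro d hd
      rcases Nat.eq_zero_or_pos d with h | h
      · exact h
      · have l1 := hlink n
        rw [show n + 1 + d = n + d + 1 from by omega] at hd
        have l2 := hlink (n + d)
        rw [← hd] at l2
        have hj : (g n).1.2 = (g (n + d)).1.2 := uniqS' hM'm l1 l2
        have e1 : ((g n).1.1, (g n).1.2) ∈ M := by rw [Prod.mk.eta]; exact hgM n
        have e2 : ((g (n + d)).1.1, (g n).1.2) ∈ M := by
          rw [hj, Prod.mk.eta]; exact hgM (n + d)
        exact ih d (uniqI' hMm hq e1 e2)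
  have hinj : Function.Injective (fun n => (g n).1.1) := by
    intro m n hmn
    simp only at hmn
    rcases le_total m n with h | h
    · obtain ⟨d, rfl⟩ : ∃ d, n = m + d := ⟨n - m, by omega⟩
      have := key m d hmn
      omega
    · obtain ⟨d, rfl⟩ : ∃ d, m = n + d := ⟨m - n, by omega⟩
      have := key n d hmn.symm
      omega
  exact Finite.exists_ne_map_eq_of_infinite (fun n => (g n).1.1)
    |>.elim (fun m hm => hm.elim (fun n ⟨hne, heq⟩ => hne (hinj heq)))

/-- In a one-to-one stable marriage market, the set of matched students is
identical in any two stable matchings; in particular a student matched in one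
stable matching is matched in every stable matching. -/
theorem stmt0 [Fintype S] [Fintype I] (mkt : Market S I)
    (hq : ∀ i, mkt.q i = 1)
    (hstrictS : ∀ s, Function.Injective (mkt.prefS s))
    (hstrictI : ∀ i, Function.Injective (mkt.prefI i))
    (M M' : Finset (S × I)) (hM : IsStable mkt M) (hM' : IsStable mkt M') :
    ∀ s : S, (∃ i, (s, i) ∈ M) ↔ (∃ i, (s, i) ∈ M') := by
  intro s
  constructor
  · rintro ⟨i, hi⟩
    by_contra h
    push_neg at h
    exact aux_lonely mkt hq hstrictS hstrictI M M' hM hM' s i hi h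
  · rintro ⟨i, hi⟩
    by_contra h
    push_neg at h
    exact aux_lonely mkt hq hstrictS hstrictI M' M hM' hM s i hi h
end

section
/- In a many-to-one stable matching market with capacities, any two stable matchings match each institution to the same number of students: for all stable M, M' and all institutions i, |M(i)| = |M'(i)|. -/
/-!
Call a student `M`-preferring if she is strictly better off in `M` than in `M'`, being
unmatched counting as worst. Students preferring neither matching are matched identically in
both. If institution `i` holds an `M`-preferring student in `M`, stability of `M'` makes `i`
full in `M'`, and it holds no `M'`-preferring student there; hence `i` has at most as many
`M`-preferring students in `M` as in `M'`. Summed over institutions, the left side counts all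
`M`-preferring students and the right side only those matched in `M'`, so equality holds at
every institution. Exchanging `M` and `M'` and counting the three kinds of students at `i`
gives `|M(i)| = |M'(i)|`.
-/

open Finset

variable {S I : Type*} [DecidableEq S] [DecidableEq I]

theorem Finset.card_eq_card_filter_add_card_filter_add_card_filter {α : Type*} (s : Finset α)
    (p q : α → Prop) [DecidablePred p] [DecidablePred q] (hpq : ∀ a ∈ s, p a → ¬q a) :
    #s = #{a ∈ s | p a} + #{a ∈ s | q a} + #{a ∈ s | ¬p a ∧ ¬q a} := by
  have hq : {a ∈ s | q a} = {a ∈ s | ¬p a ∧ q a} :=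
    filter_congr fun a ha => ⟨fun h => ⟨fun hp => hpq a ha hp h, h⟩, And.right⟩
  rw [hq, add_assoc, ← filter_filter, ← filter_filter,
    card_filter_add_card_filter_not, card_filter_add_card_filter_not]

omit [DecidableEq S] in
theorem sum_card_filter_edgesOf [Fintype I] (N : Finset (S × I)) (p : S × I → Prop)
    [DecidablePred p] : ∑ i, #{e ∈ edgesOf N i | p e} = #{e ∈ N | p e} := by
  simp only [edgesOf, filter_comm (fun e : S × I => e.2 = _)]
  exact (card_eq_sum_card_fiberwise fun e _ => mem_univ e.2).symm

omit [DecidableEq S] [DecidableEq I] in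
/-- `s` is strictly better off under `M` than under `M'`; the universal clause is vacuous
when `s` is unmatched under `M'`, which thus counts as worst. -/
def Prefers (mkt : Market S I) (M M' : Finset (S × I)) (s : S) : Prop :=
  ∃ i, (s, i) ∈ M ∧ ∀ j, (s, j) ∈ M' → mkt.prefS s i < mkt.prefS s j

section Matching

variable {mkt : Market S I} {M M' N N' : Finset (S × I)} {s t : S} {i j : I}

theorem IsMatching.injOn_fst (hN : IsMatching mkt N) : Set.InjOn Prod.fst (N : Set (S × I)) :=
  fun e he f hf hef =>
    card_le_one.mp (hN.2.1 e.1) e (mem_filter.mpr ⟨he, rfl⟩) f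
      (mem_filter.mpr ⟨hf, hef.symm⟩)

theorem IsMatching.eq_of_mem (hN : IsMatching mkt N) (hi : (s, i) ∈ N) (hj : (s, j) ∈ N) :
    i = j :=
  congrArg Prod.snd (hN.injOn_fst hi hj rfl)

theorem IsMatching.card_filter_fst_le (hN' : IsMatching mkt N') (p : S → Prop) [DecidablePred p]
    (hp : ∀ s, p s → ∃ i, (s, i) ∈ N) : #{e ∈ N' | p e.1} ≤ #{e ∈ N | p e.1} :=
  calc #{e ∈ N' | p e.1} = #({e ∈ N' | p e.1}.image Prod.fst) :=
        (card_image_of_injOn (hN'.injOn_fst.mono (coe_subset.mpr (filter_subset _ _)))).symm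
    _ ≤ #({e ∈ N | p e.1}.image Prod.fst) := by
        refine card_le_card fun s hs => ?_
        obtain ⟨e, he, rfl⟩ := mem_image.mp hs
        obtain ⟨i, hi⟩ := hp e.1 (mem_filter.mp he).2
        exact mem_image.mpr ⟨(e.1, i), mem_filter.mpr ⟨hi, (mem_filter.mp he).2⟩, rfl⟩
    _ ≤ #{e ∈ N | p e.1} := card_image_le

omit [DecidableEq S] [DecidableEq I] in
theorem Prefers.not_prefers (h : Prefers mkt M M' s) : ¬Prefers mkt M' M s := by
  rintro ⟨j, hj, hj'⟩
  obtain ⟨i, hi, hi'⟩ := h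
  exact lt_asymm (hi' j hj) (hj' i hi)

theorem Prefers.lt_of_mem (h : Prefers mkt M M' s) (hM : IsMatching mkt M) (hi : (s, i) ∈ M)
    (hj : (s, j) ∈ M') : mkt.prefS s i < mkt.prefS s j := by
  obtain ⟨k, hk, hk'⟩ := h
  exact hM.eq_of_mem hk hi ▸ hk' j hj

theorem mem_of_mem_of_not_prefers (hstrictS : ∀ s, Function.Injective (mkt.prefS s))
    (hM : IsMatching mkt M) (h : ¬Prefers mkt M M' s) (h' : ¬Prefers mkt M' M s)
    (hi : (s, i) ∈ M) : (s, i) ∈ M' := by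
  simp only [Prefers, not_exists, not_and, not_forall, not_lt] at h
  obtain ⟨j, hj, hji⟩ := h i hi
  obtain rfl | hne := eq_or_ne j i
  · exact hj
  have hlt : mkt.prefS s j < mkt.prefS s i := hji.lt_of_ne fun h => hne (hstrictS s h)
  exact absurd ⟨j, hj, fun k hk => hM.eq_of_mem hi hk ▸ hlt⟩ h'

theorem IsStable.full_and_prefI_le (hM : IsStable mkt M) (hE : (s, i) ∈ mkt.E)
    (hs : ∀ j, (s, j) ∈ M → mkt.prefS s i < mkt.prefS s j) :
    mkt.q i ≤ #(edgesOf M i) ∧ ∀ t, (t, i) ∈ M → mkt.prefI i t ≤ mkt.prefI i s := by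
  have hnot : (s, i) ∉ M := fun h => lt_irrefl _ (hs i h)
  by_contra hcon
  refine hM.2 s i ⟨hE, hnot, hs, ?_⟩
  simp only [not_and_or, not_le, not_forall, exists_prop] at hcon
  rcases hcon with hfree | ⟨t, ht, hlt⟩
  · exact Or.inl hfree
  · exact Or.inr ⟨t, mem_image.mpr ⟨(t, i), mem_filter.mpr ⟨ht, rfl⟩, rfl⟩, hlt⟩

/-- Each of the two students would have to rank strictly below the other at `i`. -/
theorem not_prefers_of_mem_of_prefers (hstrictI : ∀ i, Function.Injective (mkt.prefI i))
    (hM : IsStable mkt M) (hM' : IsStable mkt M') (hs : (s, i) ∈ M) (hsP : Prefers mkt M M' s)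
    (ht : (t, i) ∈ M') : ¬Prefers mkt M' M t := by
  intro htP
  have hts := (hM'.full_and_prefI_le (hM.1.1 hs) fun j => hsP.lt_of_mem hM.1 hs).2 t ht
  have hst := (hM.full_and_prefI_le (hM'.1.1 ht) fun j => htP.lt_of_mem hM'.1 ht).2 s hs
  obtain rfl := hstrictI i (le_antisymm hst hts)
  exact lt_irrefl _ (hsP.lt_of_mem hM.1 hs ht)

end Matching

section Counting

open scoped Classical

variable {mkt : Market S I} {M M' : Finset (S × I)}

theorem filter_edgesOf_not_prefers_eq (hstrictS : ∀ s, Function.Injective (mkt.prefS s))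
    (hM : IsMatching mkt M) (hM' : IsMatching mkt M') (i : I) :
    {e ∈ edgesOf M i | ¬Prefers mkt M M' e.1 ∧ ¬Prefers mkt M' M e.1} =
      {e ∈ edgesOf M' i | ¬Prefers mkt M M' e.1 ∧ ¬Prefers mkt M' M e.1} := by
  ext ⟨s, j⟩
  simp only [edgesOf, mem_filter]
  constructor
  · rintro ⟨⟨hj, rfl⟩, h, h'⟩
    exact ⟨⟨mem_of_mem_of_not_prefers hstrictS hM h h' hj, rfl⟩, h, h'⟩
  · rintro ⟨⟨hj, rfl⟩, h, h'⟩
    exact ⟨⟨mem_of_mem_of_not_prefers hstrictS hM' h' h hj, rfl⟩, h, h'⟩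

omit [DecidableEq S] in
theorem card_edgesOf_eq_prefers_add_prefers_add_not_prefers (mkt : Market S I)
    (M M' N : Finset (S × I)) (i : I) :
    #(edgesOf N i) = #{e ∈ edgesOf N i | Prefers mkt M M' e.1} +
      #{e ∈ edgesOf N i | Prefers mkt M' M e.1} +
      #{e ∈ edgesOf N i | ¬Prefers mkt M M' e.1 ∧ ¬Prefers mkt M' M e.1} :=
  card_eq_card_filter_add_card_filter_add_card_filter _ _ _ fun _ _ h => h.not_prefers

theorem card_filter_prefers_le (hstrictS : ∀ s, Function.Injective (mkt.prefS s))
    (hstrictI : ∀ i, Function.Injective (mkt.prefI i))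
    (hM : IsStable mkt M) (hM' : IsStable mkt M') (i : I) :
    #{e ∈ edgesOf M i | Prefers mkt M M' e.1} ≤
      #{e ∈ edgesOf M' i | Prefers mkt M M' e.1} := by
  rcases (#{e ∈ edgesOf M i | Prefers mkt M M' e.1}).eq_zero_or_pos with h0 | hpos
  · exact h0 ▸ Nat.zero_le _
  obtain ⟨⟨s, j⟩, hs⟩ := card_pos.mp hpos
  simp only [edgesOf, mem_filter] at hs
  obtain ⟨⟨hsM, rfl⟩, hsP⟩ := hs
  have hfull := (hM'.full_and_prefI_le (hM.1.1 hsM) fun k => hsP.lt_of_mem hM.1 hsM).1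
  have hnone : #{e ∈ edgesOf M' j | Prefers mkt M' M e.1} = 0 := by
    refine card_eq_zero.mpr (filter_eq_empty_iff.mpr fun e he => ?_)
    obtain ⟨heM', rfl⟩ := mem_filter.mp he
    exact not_prefers_of_mem_of_prefers hstrictI hM hM' hsM hsP heM'
  have hdM := card_edgesOf_eq_prefers_add_prefers_add_not_prefers mkt M M' M j
  have hdM' := card_edgesOf_eq_prefers_add_prefers_add_not_prefers mkt M M' M' j
  rw [filter_edgesOf_not_prefers_eq hstrictS hM.1 hM'.1] at hdM
  have hcap := hM.1.2.2 j
  omega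

theorem card_filter_prefers_eq [Fintype I] (hstrictS : ∀ s, Function.Injective (mkt.prefS s))
    (hstrictI : ∀ i, Function.Injective (mkt.prefI i))
    (hM : IsStable mkt M) (hM' : IsStable mkt M') (i : I) :
    #{e ∈ edgesOf M i | Prefers mkt M M' e.1} =
      #{e ∈ edgesOf M' i | Prefers mkt M M' e.1} := by
  have hle := card_filter_prefers_le hstrictS hstrictI hM hM'
  have hsum : ∑ i, #{e ∈ edgesOf M' i | Prefers mkt M M' e.1} ≤
      ∑ i, #{e ∈ edgesOf M i | Prefers mkt M M' e.1} := by
    simp only [sum_card_filter_edgesOf]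
    exact hM'.1.card_filter_fst_le (Prefers mkt M M') fun s ⟨i, hi, _⟩ => ⟨i, hi⟩
  exact (sum_eq_sum_iff_of_le fun i _ => hle i).mp
    (le_antisymm (sum_le_sum fun i _ => hle i) hsum) i (mem_univ i)

end Counting

theorem stmt1_general [Fintype I] (mkt : Market S I)
    (hstrictS : ∀ s, Function.Injective (mkt.prefS s))
    (hstrictI : ∀ i, Function.Injective (mkt.prefI i))
    (M M' : Finset (S × I)) (hM : IsStable mkt M) (hM' : IsStable mkt M') :
    ∀ i : I, (edgesOf M i).card = (edgesOf M' i).card := by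
  intro i
  have hdM := card_edgesOf_eq_prefers_add_prefers_add_not_prefers mkt M M' M i
  have hdM' := card_edgesOf_eq_prefers_add_prefers_add_not_prefers mkt M M' M' i
  rw [filter_edgesOf_not_prefers_eq hstrictS hM.1 hM'.1] at hdM
  have h := card_filter_prefers_eq hstrictS hstrictI hM hM' i
  have h' := card_filter_prefers_eq hstrictS hstrictI hM' hM i
  omega

/-- Rural Hospitals: any two stable matchings match each institution to the
same number of students. -/
theorem stmt1 [Fintype S] [Fintype I] (mkt : Market S I)
    (hstrictS : ∀ s, Function.Injective (mkt.prefS s))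
    (hstrictI : ∀ i, Function.Injective (mkt.prefI i))
    (M M' : Finset (S × I)) (hM : IsStable mkt M) (hM' : IsStable mkt M') :
    ∀ i : I, (edgesOf M i).card = (edgesOf M' i).card :=
  stmt1_general mkt hstrictS hstrictI M M' hM hM'
end

section
/- For a fixed institution i in a many-to-one stable matching market, the nonempty stable sets of i can be indexed E_i^1, …, E_i^{k_i} so that their least-preferred (cutoff) students are strictly decreasing in i's preference: worst_i(E_i^1) ≻_i worst_i(E_i^2) ≻_i … ≻_i worst_i(E_i^{k_i}). -/
/-!
Two stable sets of `i` with the same worst student coincide, so the worst student is injective on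
the finitely many nonempty stable sets, and sorting them by it gives the enumeration.

For the rigidity, let `X` be the students who strictly prefer `M'` to `M`. If an `X`-student
sits at `j` under `M'`, stability of `M` makes `j` full under `M` with students it prefers to her,
and stability of `M'` then forces every student `j` loses to lie in `X`; hence `j` holds at most as
many `X`-students under `M'` as under `M`. Since all of `X` is matched under `M'`, summing over
institutions gives equality at every `j`. Now if `M(i)` and `M'(i)` have the same worst student,
`M(i) \ M'(i) ⊆ X` and `M'(i) \ M(i)` consists of students preferring `M` to `M'`, so it
misses `X`; the equal counts at `i` then give `M(i) ⊆ M'(i)`, and symmetrically.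
-/

open Finset

variable {S I : Type*} [DecidableEq S] [DecidableEq I]

lemma Finset.card_inter_le_card_inter_of_sdiff_subset {α : Type*} [DecidableEq α]
    {A B X : Finset α} (hcard : #B ≤ #A) (hsub : A \ B ⊆ X) : #(B ∩ X) ≤ #(A ∩ X) := by
  have hout : A \ X ⊆ B \ X := fun x hx => by
    rw [mem_sdiff] at hx ⊢
    exact ⟨by_contra fun hxB => hx.2 (hsub (mem_sdiff.mpr ⟨hx.1, hxB⟩)), hx.2⟩
  have := card_le_card hout
  have := card_inter_add_card_sdiff A X
  have := card_inter_add_card_sdiff B X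
  omega

lemma Set.Finite.exists_fin_enum_strictMono {α β : Type*} [LinearOrder β] {s : Set α}
    (hs : s.Finite) {g : α → β} (hg : s.InjOn g) :
    ∃ (k : ℕ) (f : Fin k → α), (∀ j, f j ∈ s) ∧ (∀ a ∈ s, ∃ j, f j = a) ∧
      StrictMono (g ∘ f) := by
  classical
  set T := hs.toFinset.image g
  set e := T.orderIsoOfFin rfl
  have hpre : ∀ j, ∃ a ∈ s, g a = e j := fun j => by
    have h := (e j).2
    simp only [T, Finset.mem_image, Set.Finite.mem_toFinset] at h
    exact h
  choose f hf_mem hf_eq using hpre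
  refine ⟨#T, f, hf_mem, fun a ha => ?_, fun j j' hjj' => ?_⟩
  · obtain ⟨j, hj⟩ :=
      e.surjective ⟨g a, Finset.mem_image_of_mem g (hs.mem_toFinset.mpr ha)⟩
    exact ⟨j, hg (hf_mem j) ha (by rw [hf_eq, hj])⟩
  · simp only [Function.comp_apply, hf_eq]
    exact e.strictMono hjj'

lemma mem_assigned {M : Finset (S × I)} {s : S} {i : I} : s ∈ assigned M i ↔ (s, i) ∈ M := by
  simp [assigned, edgesOf]

lemma card_assigned (M : Finset (S × I)) (i : I) : #(assigned M i) = #(edgesOf M i) :=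
  card_image_of_injOn fun _ he _ he' h =>
    Prod.ext h ((mem_filter.mp he).2.trans (mem_filter.mp he').2.symm)

section Market

variable {mkt : Market S I} {M M' : Finset (S × I)}

lemma IsMatching.eq_of_mem_of_mem (hM : IsMatching mkt M) {s : S} {i i' : I}
    (h : (s, i) ∈ M) (h' : (s, i') ∈ M) : i = i' :=
  congrArg Prod.snd <| card_le_one.mp (hM.2.1 s) (s, i) (by simp [h]) (s, i') (by simp [h'])

lemma IsMatching.pairwiseDisjoint_assigned (hM : IsMatching mkt M) (J : Set I) :
    J.PairwiseDisjoint (assigned M) := fun _ _ _ _ hjj' =>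
  disjoint_left.mpr fun _ hx hx' =>
    hjj' (hM.eq_of_mem_of_mem (mem_assigned.mp hx) (mem_assigned.mp hx'))

section

omit [DecidableEq I]

open Classical in
/-- The students who strictly prefer `M'` to `M`, being unmatched counting as worst. -/
noncomputable def improvers (mkt : Market S I) (M M' : Finset (S × I)) : Finset S :=
  (M'.image Prod.fst).filter
    fun s => ∃ j, (s, j) ∈ M' ∧ ∀ j', (s, j') ∈ M → mkt.prefS s j < mkt.prefS s j'

lemma mem_improvers {s : S} :
    s ∈ improvers mkt M M' ↔
      ∃ j, (s, j) ∈ M' ∧ ∀ j', (s, j') ∈ M → mkt.prefS s j < mkt.prefS s j' := by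
  simp only [improvers, mem_filter, mem_image, and_iff_right_iff_imp]
  rintro ⟨j, hj, -⟩
  exact ⟨(s, j), hj, rfl⟩

lemma disjoint_improvers_swap : Disjoint (improvers mkt M M') (improvers mkt M' M) :=
  disjoint_left.mpr fun _ h h' => by
    obtain ⟨j, hj, hlt⟩ := mem_improvers.mp h
    obtain ⟨j', hj', hlt'⟩ := mem_improvers.mp h'
    exact lt_asymm (hlt j' hj') (hlt' j hj)

end

/-- Otherwise `(s, j)` would block `M'`. -/
lemma mem_improvers_of_lt (hS : ∀ s, Function.Injective (mkt.prefS s))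
    (hM : IsMatching mkt M) (hM' : IsStable mkt M') {s s' : S} {j : I}
    (hsj : (s, j) ∈ M) (hsj' : (s, j) ∉ M') (hs' : s' ∈ assigned M' j)
    (hlt : mkt.prefI j s < mkt.prefI j s') : s ∈ improvers mkt M M' := by
  have hnotBetter : ¬ ∀ j', (s, j') ∈ M' → mkt.prefS s j < mkt.prefS s j' := fun h =>
    hM'.2 s j ⟨hM.1 hsj, hsj', h, Or.inr ⟨s', hs', hlt⟩⟩
  push Not at hnotBetter
  obtain ⟨j'', hj'', hle⟩ := hnotBetter
  have hlt' : mkt.prefS s j'' < mkt.prefS s j :=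
    hle.lt_of_ne fun h => hsj' (hS s h ▸ hj'')
  exact mem_improvers.mpr ⟨j'', hj'', fun j' hj' => hM.eq_of_mem_of_mem hsj hj' ▸ hlt'⟩

/-- Otherwise `(s, j)` would block `M`. -/
lemma full_and_prefers_of_mem_improvers (hI : ∀ i, Function.Injective (mkt.prefI i))
    (hM : IsStable mkt M) (hM' : IsMatching mkt M') {s : S} {j : I}
    (hs : s ∈ improvers mkt M M') (hsj : (s, j) ∈ M') :
    mkt.q j ≤ #(assigned M j) ∧ ∀ s' ∈ assigned M j, mkt.prefI j s' < mkt.prefI j s := by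
  obtain ⟨j₀, hj₀, hbetter⟩ := mem_improvers.mp hs
  obtain rfl : j₀ = j := hM'.eq_of_mem_of_mem hj₀ hsj
  have hsjM : (s, j₀) ∉ M := fun h => lt_irrefl _ (hbetter j₀ h)
  have hnotBlocks : ¬ ((edgesOf M j₀).card < mkt.q j₀ ∨
      ∃ s' ∈ assigned M j₀, mkt.prefI j₀ s < mkt.prefI j₀ s') := fun h =>
    hM.2 s j₀ ⟨hM'.1 hj₀, hsjM, hbetter, h⟩
  push Not at hnotBlocks
  refine ⟨card_assigned M j₀ ▸ hnotBlocks.1, fun s' hs' => ?_⟩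
  refine (hnotBlocks.2 s' hs').lt_of_ne fun h => hsjM ?_
  exact hI j₀ h ▸ mem_assigned.mp hs'

lemma card_assigned_inter_improvers_le (hS : ∀ s, Function.Injective (mkt.prefS s))
    (hI : ∀ i, Function.Injective (mkt.prefI i)) (hM : IsStable mkt M) (hM' : IsStable mkt M')
    (j : I) :
    #(assigned M' j ∩ improvers mkt M M') ≤ #(assigned M j ∩ improvers mkt M M') := by
  obtain ⟨s, hs⟩ | hempty := (assigned M' j ∩ improvers mkt M M').eq_empty_or_nonempty.symm
  · rw [mem_inter] at hs
    obtain ⟨hfull, hprefers⟩ :=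
      full_and_prefers_of_mem_improvers hI hM hM'.1 hs.2 (mem_assigned.mp hs.1)
    refine card_inter_le_card_inter_of_sdiff_subset ?_ fun s' hs' => ?_
    · exact card_assigned M' j ▸ (hM'.1.2.2 j).trans hfull
    · rw [mem_sdiff, mem_assigned, mem_assigned] at hs'
      exact mem_improvers_of_lt hS hM.1 hM' hs'.1 hs'.2 hs.1 (hprefers s' (mem_assigned.mpr hs'.1))
  · simp [hempty]

lemma card_assigned_inter_improvers_eq (hS : ∀ s, Function.Injective (mkt.prefS s))
    (hI : ∀ i, Function.Injective (mkt.prefI i)) (hM : IsStable mkt M) (hM' : IsStable mkt M')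
    (i : I) :
    #(assigned M' i ∩ improvers mkt M M') = #(assigned M i ∩ improvers mkt M M') := by
  set X := improvers mkt M M'
  set J := insert i (M'.image Prod.snd)
  have hle : ∀ j ∈ J, #(assigned M' j ∩ X) ≤ #(assigned M j ∩ X) := fun j _ =>
    card_assigned_inter_improvers_le hS hI hM hM' j
  have hdisj : ∀ N : Finset (S × I), IsMatching mkt N →
      (J : Set I).PairwiseDisjoint fun j => assigned N j ∩ X := fun N hN =>
    (hN.pairwiseDisjoint_assigned J).mono fun _ => inter_subset_left
  have hcover : J.biUnion (fun j => assigned M' j ∩ X) = X := by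
    refine (biUnion_subset.mpr fun _ _ => inter_subset_right).antisymm fun s hs => ?_
    obtain ⟨j, hj, -⟩ := mem_improvers.mp hs
    exact mem_biUnion.mpr ⟨j, mem_insert_of_mem (mem_image_of_mem _ hj),
      mem_inter.mpr ⟨mem_assigned.mpr hj, hs⟩⟩
  have hsum_eq : ∑ j ∈ J, #(assigned M' j ∩ X) = ∑ j ∈ J, #(assigned M j ∩ X) := by
    refine (sum_le_sum hle).antisymm ?_
    calc ∑ j ∈ J, #(assigned M j ∩ X) = #(J.biUnion fun j => assigned M j ∩ X) :=
          (card_biUnion (hdisj M hM.1)).symm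
      _ ≤ #X := card_le_card (biUnion_subset.mpr fun _ _ => inter_subset_right)
      _ = ∑ j ∈ J, #(assigned M' j ∩ X) := by rw [← card_biUnion (hdisj M' hM'.1), hcover]
  exact (sum_eq_sum_iff_of_le hle).mp hsum_eq i (mem_insert_self _ _)

lemma sdiff_assigned_subset_improvers (hS : ∀ s, Function.Injective (mkt.prefS s))
    (hI : ∀ i, Function.Injective (mkt.prefI i)) (hM : IsMatching mkt M)
    (hM' : IsStable mkt M') {i : I} (hne' : (assigned M' i).Nonempty)
    (hle : (assigned M i).sup (mkt.prefI i) ≤ (assigned M' i).sup (mkt.prefI i)) :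
    assigned M i \ assigned M' i ⊆ improvers mkt M M' := fun s hs => by
  rw [mem_sdiff] at hs
  obtain ⟨w, hw, hw_sup⟩ := exists_mem_eq_sup _ hne' (mkt.prefI i)
  have hlt : mkt.prefI i s < mkt.prefI i w :=
    (hw_sup ▸ (le_sup hs.1).trans hle).lt_of_ne fun h => hs.2 (hI i h ▸ hw)
  exact mem_improvers_of_lt hS hM hM' (mem_assigned.mp hs.1) (mt mem_assigned.mpr hs.2) hw hlt

lemma assigned_subset_of_sup_eq (hS : ∀ s, Function.Injective (mkt.prefS s))
    (hI : ∀ i, Function.Injective (mkt.prefI i)) (hM : IsStable mkt M) (hM' : IsStable mkt M')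
    {i : I} (hne : (assigned M i).Nonempty) (hne' : (assigned M' i).Nonempty)
    (hsup : (assigned M i).sup (mkt.prefI i) = (assigned M' i).sup (mkt.prefI i)) :
    assigned M i ⊆ assigned M' i := by
  set X := improvers mkt M M'
  have hlost : assigned M i \ assigned M' i ⊆ X :=
    sdiff_assigned_subset_improvers hS hI hM.1 hM' hne' hsup.le
  have hgained : assigned M' i \ assigned M i ⊆ improvers mkt M' M :=
    sdiff_assigned_subset_improvers hS hI hM'.1 hM hne hsup.ge
  have hsub : assigned M' i ∩ X ⊆ assigned M i ∩ X := fun s hs => by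
    rw [mem_inter] at hs ⊢
    refine ⟨by_contra fun hsM => ?_, hs.2⟩
    exact disjoint_left.mp disjoint_improvers_swap hs.2 (hgained (mem_sdiff.mpr ⟨hs.1, hsM⟩))
  have heq := eq_of_subset_of_card_le hsub (card_assigned_inter_improvers_eq hS hI hM hM' i).ge
  intro s hs
  by_contra hs'
  have hsX : s ∈ assigned M i ∩ X := mem_inter.mpr ⟨hs, hlost (mem_sdiff.mpr ⟨hs, hs'⟩)⟩
  exact hs' (mem_inter.mp (heq ▸ hsX)).1

end Market

def IsStableSet (mkt : Market S I) (i : I) (F : Finset S) : Prop :=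
  ∃ M, IsStable mkt M ∧ assigned M i = F

lemma IsStableSet.eq_of_sup_eq {mkt : Market S I} {i : I} {F F' : Finset S}
    (hS : ∀ s, Function.Injective (mkt.prefS s)) (hI : ∀ i, Function.Injective (mkt.prefI i))
    (hF : IsStableSet mkt i F) (hF' : IsStableSet mkt i F') (hne : F.Nonempty)
    (hne' : F'.Nonempty) (hsup : F.sup (mkt.prefI i) = F'.sup (mkt.prefI i)) : F = F' := by
  obtain ⟨M, hM, rfl⟩ := hF
  obtain ⟨M', hM', rfl⟩ := hF'
  exact (assigned_subset_of_sup_eq hS hI hM hM' hne hne' hsup).antisymm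
    (assigned_subset_of_sup_eq hS hI hM' hM hne' hne hsup.symm)

lemma finite_setOf_isStableSet (mkt : Market S I) (i : I) :
    {F | IsStableSet mkt i F}.Finite :=
  (mkt.E.powerset.image (assigned · i)).finite_toSet.subset fun _ ⟨M, hM, hMF⟩ =>
    mem_image.mpr ⟨M, mem_powerset.mpr hM.1.1, hMF⟩

theorem stmt6_general (mkt : Market S I)
    (hstrictS : ∀ s, Function.Injective (mkt.prefS s))
    (hstrictI : ∀ i, Function.Injective (mkt.prefI i))
    (i : I) :
    ∃ (k : ℕ) (f : Fin k → Finset S),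
      (∀ j, (f j).Nonempty ∧ ∃ M, IsStable mkt M ∧ assigned M i = f j) ∧
      (∀ F : Finset S, F.Nonempty → (∃ M, IsStable mkt M ∧ assigned M i = F) →
        ∃ j, f j = F) ∧
      (∀ j j' : Fin k, j < j' →
        (f j).sup (mkt.prefI i) < (f j').sup (mkt.prefI i)) := by
  have hfin : {F | F.Nonempty ∧ IsStableSet mkt i F}.Finite :=
    (finite_setOf_isStableSet mkt i).subset fun _ hF => hF.2
  obtain ⟨k, f, hf_mem, hf_surj, hf_mono⟩ := hfin.exists_fin_enum_strictMono
    fun F hF F' hF' hsup => hF.2.eq_of_sup_eq hstrictS hstrictI hF'.2 hF.1 hF'.1 hsup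
  exact ⟨k, f, hf_mem, fun F hne hF => hf_surj F ⟨hne, hF⟩, fun _ _ h => hf_mono h⟩

/-- The nonempty stable sets of an institution i can be enumerated so that their
least-preferred (cutoff) students are strictly decreasing in i's preference
(the rank of the worst student strictly increases along the enumeration). -/
theorem stmt6 [Fintype S] [Fintype I] (mkt : Market S I)
    (hstrictS : ∀ s, Function.Injective (mkt.prefS s))
    (hstrictI : ∀ i, Function.Injective (mkt.prefI i))
    (i : I) :
    ∃ (k : ℕ) (f : Fin k → Finset S),
      (∀ j, (f j).Nonempty ∧ ∃ M, IsStable mkt M ∧ assigned M i = f j) ∧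
      (∀ F : Finset S, F.Nonempty → (∃ M, IsStable mkt M ∧ assigned M i = F) →
        ∃ j, f j = F) ∧
      (∀ j j' : Fin k, j < j' →
        (f j).sup (mkt.prefI i) < (f j').sup (mkt.prefI i)) :=
  stmt6_general mkt hstrictS hstrictI i
end

section
/- In a one-to-one stable marriage market, let M' be a matching produced by a deferred-acceptance-style process such that every student in M'(i) is weakly preferred by institution i to every student not in M'(i) who ever proposed to i, and i is matched whenever someone acceptable proposed; if every student s who was rejected by i was rejected only when i held a strictly better student, then no pair (s,i) where s was rejected by i can block M'. -/
open Finset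

variable {S I : Type*} [DecidableEq S] [DecidableEq I]

/-- Deferred-acceptance invariant: if every student held by i in M' is weakly
preferred by i to every proposer not held, i is matched whenever an acceptable
student proposed, and students were rejected only in favor of strictly better
students, then no rejected student forms a blocking pair with i. -/
theorem stmt14 [Fintype S] [Fintype I] (mkt : Market S I)
    (hq : ∀ i, mkt.q i = 1)
    (M' : Finset (S × I)) (i : I) (P Rej : Finset S) (hRP : Rej ⊆ P)
    (hRE : ∀ s ∈ Rej, (s, i) ∈ mkt.E)
    (h1 : ∀ s : S, (s, i) ∈ M' → ∀ t ∈ P, (t, i) ∉ M' →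
      mkt.prefI i s ≤ mkt.prefI i t)
    (h2 : (∃ t ∈ P, (t, i) ∈ mkt.E) → ∃ s : S, (s, i) ∈ M')
    (h3 : ∀ s ∈ Rej, ∃ t ∈ P, mkt.prefI i t < mkt.prefI i s) :
    ∀ s ∈ Rej, ¬ Blocks mkt M' s i := by
  intro s hs hblk
  obtain ⟨hE, hnM, _, hlast⟩ := hblk
  rcases hlast with hfree | ⟨s', hs', hpref⟩
  · obtain ⟨t, htM⟩ := h2 ⟨s, hRP hs, hE⟩
    have : (t, i) ∈ edgesOf M' i := by simp [edgesOf, htM]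
    have : 0 < (edgesOf M' i).card := Finset.card_pos.2 ⟨_, this⟩
    have := hq i
    omega
  · simp only [assigned, Finset.mem_image] at hs'
    obtain ⟨e, he, rfl⟩ := hs'
    simp only [edgesOf, Finset.mem_filter] at he
    obtain ⟨heM, hei⟩ := he
    have : (e.1, i) ∈ M' := by rw [← hei]; exact heM
    exact absurd (h1 e.1 this s (hRP hs) hnM) (by omega)
end
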